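/- Let L₁ be a connected finite graph with one distinguished vertex w, and let L₂ be a connected finite graph with two distinguished vertices u₁, u₂. Let L be the graph obtained by gluing L₁ and L₂ along the identification w = u₁ (disjoint union of vertex sets modulo this identification, disjoint union of edge sets). Then the number of spanning 2-forests of L separating the two distinguished vertices of L equals κ(L₁) · F₂(L₂), where κ(L₁) is the number of spanning trees of L₁ and F₂(L₂) is the number of spanning 2-forests of L₂ separating u₁ and u₂. -/

import Mathlib

structure Multigraph where
  V : Type
  E : Type
  [fintypeV : Fintype V]
  [fintypeE : Fintype E]
  [decEqV : DecidableEq V]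
  ends : E → Sym2 V

attribute [instance] Multigraph.fintypeV Multigraph.fintypeE Multigraph.decEqV

namespace Multigraph

variable (G : Multigraph)

/-- Reachability in the spanning subgraph using only the edges in `S`. -/
def Reach (S : Set G.E) : G.V → G.V → Prop :=
  Relation.ReflTransGen (fun x y => ∃ e ∈ S, G.ends e = s(x, y))

/-- The multigraph is connected. -/
def Connected : Prop := ∀ x y : G.V, G.Reach Set.univ x y

/-- The edge set `S` is acyclic: every edge of `S` is a bridge of `S`. -/
def IsForest (S : Finset G.E) : Prop :=
  ∀ e ∈ S, ∀ x y : G.V, G.ends e = s(x, y) → ¬ G.Reach ((↑S : Set G.E) \ {e}) x y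

/-- `S` is the edge set of a spanning tree. -/
def IsSpanningTree (S : Finset G.E) : Prop :=
  G.IsForest S ∧ ∀ x y : G.V, G.Reach ↑S x y

/-- `S` is the edge set of a spanning 2-forest consisting of two trees, one
containing `u`, the other containing `v`, whose vertex sets partition the vertices. -/
def IsTwoForest (u v : G.V) (S : Finset G.E) : Prop :=
  G.IsForest S ∧ ¬ G.Reach ↑S u v ∧ ∀ x : G.V, G.Reach ↑S u x ∨ G.Reach ↑S v x

/-- The number of spanning trees. -/
noncomputable def treeCount : ℕ :=
  Nat.card {S : Finset G.E // G.IsSpanningTree S}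

/-- The number of spanning 2-forests separating `u` and `v`. -/
noncomputable def twoForestCount (u v : G.V) : ℕ :=
  Nat.card {S : Finset G.E // G.IsTwoForest u v S}

end Multigraph

/-- The graph obtained by gluing `G` and `H` along the identification `w = u`:
vertex sets are joined disjointly modulo the identification, edge sets are joined
disjointly. -/
def glue1 (G H : Multigraph) (w : G.V) (u : H.V) : Multigraph where
  V := {x : G.V // x ≠ w} ⊕ H.V
  E := G.E ⊕ H.E
  ends := fun e =>
    match e with
    | .inl e => (G.ends e).map
        (fun x => if h : x = w then Sum.inr u else Sum.inl ⟨x, h⟩)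
    | .inr e => (H.ends e).map Sum.inr

/-!
Reachability in the glued graph is read off from the two pieces: projecting the glued graph
onto `L₁` (collapsing `L₂` to `w`) or onto `L₂` (collapsing `L₁` to `u₁`) preserves
reachability, and so do the two embeddings. Hence an edge set `S = T₁ ⊔ T₂` of the glued graph
is a forest iff `T₁` and `T₂` are, and it spans two trees separating `u₁` and `u₂` iff `T₁`
connects all of `L₁` to `w = u₁` and `T₂` is a 2-forest of `L₂` separating `u₁` and `u₂`.
So `S ↦ (T₁, T₂)` is a bijection onto pairs (spanning tree of `L₁`, 2-forest of `L₂`).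
-/

theorem Sym2.exists_eq_mk_of_map_eq_mk {α β : Type*} {f : α → β} {z : Sym2 α} {x y : β}
    (h : z.map f = s(x, y)) : ∃ a b, z = s(a, b) ∧ f a = x ∧ f b = y := by
  induction z using Sym2.ind with
  | h a b =>
    rcases Sym2.eq_iff.mp h with ⟨rfl, rfl⟩ | ⟨rfl, rfl⟩
    exacts [⟨a, b, rfl, rfl, rfl⟩, ⟨b, a, Sym2.eq_swap, rfl, rfl⟩]

theorem Finset.coe_toLeft {α β : Type*} (S : Finset (α ⊕ β)) :
    (S.toLeft : Set α) = Sum.inl ⁻¹' (S : Set (α ⊕ β)) := by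
  ext; simp

theorem Finset.coe_toRight {α β : Type*} (S : Finset (α ⊕ β)) :
    (S.toRight : Set β) = Sum.inr ⁻¹' (S : Set (α ⊕ β)) := by
  ext; simp

namespace Multigraph

variable {G : Multigraph}

theorem Reach.symm {T : Set G.E} {x y : G.V} (h : G.Reach T x y) : G.Reach T y x :=
  have : Std.Symm fun x y : G.V => ∃ e ∈ T, G.ends e = s(x, y) :=
    ⟨fun _ _ ⟨e, he, hends⟩ => ⟨e, he, hends.trans Sym2.eq_swap⟩⟩
  Std.Symm.symm (r := Relation.ReflTransGen _) _ _ h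

theorem Reach.trans {T : Set G.E} {x y z : G.V} (hxy : G.Reach T x y) (hyz : G.Reach T y z) :
    G.Reach T x z :=
  Relation.ReflTransGen.trans hxy hyz

theorem Reach.map {G' : Multigraph} {T : Set G.E} {T' : Set G'.E} (p : G.V → G'.V)
    (hT : ∀ e ∈ T, ∀ x y, G.ends e = s(x, y) →
      p x = p y ∨ ∃ e' ∈ T', G'.ends e' = s(p x, p y))
    {x y : G.V} (h : G.Reach T x y) : G'.Reach T' (p x) (p y) := by
  induction h with
  | refl => exact .refl
  | tail _ hstep ih =>
    obtain ⟨e, he, hends⟩ := hstep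
    rcases hT e he _ _ hends with heq | ⟨e', he', hends'⟩
    · exact heq ▸ ih
    · exact ih.tail ⟨e', he', hends'⟩

def IsBridge (T : Set G.E) (e : G.E) : Prop :=
  ∀ x y : G.V, G.ends e = s(x, y) → ¬ G.Reach (T \ {e}) x y

theorem isBridge_iff {T : Set G.E} {e : G.E} {x y : G.V} (h : G.ends e = s(x, y)) :
    G.IsBridge T e ↔ ¬ G.Reach (T \ {e}) x y := by
  refine ⟨fun hb => hb x y h, fun hxy a b hab hr => ?_⟩
  rcases Sym2.eq_iff.mp (h.symm.trans hab) with ⟨rfl, rfl⟩ | ⟨rfl, rfl⟩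
  exacts [hxy hr, hxy hr.symm]

theorem forall_reach_iff {T : Set G.E} (w : G.V) :
    (∀ x y, G.Reach T x y) ↔ ∀ x, G.Reach T w x :=
  ⟨fun h => h w, fun h x y => (h x).symm.trans (h y)⟩

theorem isForest_iff_isBridge (S : Finset G.E) : G.IsForest S ↔ ∀ e ∈ S, G.IsBridge S e :=
  Iff.rfl

end Multigraph

open Multigraph

namespace glue1

variable (G H : Multigraph) (w : G.V) (u : H.V)

def ofLeft : G.V → (glue1 G H w u).V :=
  fun x => if h : x = w then .inr u else .inl ⟨x, h⟩

def projLeft : (glue1 G H w u).V → G.V := Sum.elim Subtype.val fun _ => w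

def projRight : (glue1 G H w u).V → H.V := Sum.elim (fun _ => u) id

variable {G H w u}

theorem ends_inl (e : G.E) :
    (glue1 G H w u).ends (.inl e) = (G.ends e).map (ofLeft G H w u) := rfl

theorem ends_inr (e : H.E) :
    (glue1 G H w u).ends (.inr e) = (H.ends e).map (Sum.inr : H.V → (glue1 G H w u).V) := rfl

theorem ofLeft_self : ofLeft G H w u w = .inr u := dif_pos rfl

theorem ofLeft_of_ne {x : G.V} (hx : x ≠ w) : ofLeft G H w u x = .inl ⟨x, hx⟩ := dif_neg hx

@[simp] theorem projLeft_ofLeft (x : G.V) : projLeft G H w u (ofLeft G H w u x) = x := by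
  by_cases h : x = w <;> simp [ofLeft, projLeft, h]

@[simp] theorem projRight_ofLeft (x : G.V) : projRight G H w u (ofLeft G H w u x) = u := by
  by_cases h : x = w <;> simp [ofLeft, projRight, h]

@[simp] theorem projLeft_inr (y : H.V) : projLeft G H w u (.inr y) = w := rfl

@[simp] theorem projRight_inr (y : H.V) : projRight G H w u (.inr y) = y := rfl

variable {S : Set (glue1 G H w u).E}

theorem reach_projLeft {a b : (glue1 G H w u).V} (h : (glue1 G H w u).Reach S a b) :
    G.Reach (Sum.inl ⁻¹' S) (projLeft G H w u a) (projLeft G H w u b) := by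
  refine h.map _ fun e he x y hxy => ?_
  rcases e with f | f
  · rw [ends_inl] at hxy
    obtain ⟨x, y, hends, rfl, rfl⟩ := Sym2.exists_eq_mk_of_map_eq_mk hxy
    exact .inr ⟨f, he, by simpa using hends⟩
  · obtain ⟨x, y, -, rfl, rfl⟩ := Sym2.exists_eq_mk_of_map_eq_mk hxy
    exact .inl rfl

theorem reach_projRight {a b : (glue1 G H w u).V} (h : (glue1 G H w u).Reach S a b) :
    H.Reach (Sum.inr ⁻¹' S) (projRight G H w u a) (projRight G H w u b) := by
  refine h.map _ fun e he x y hxy => ?_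
  rcases e with f | f
  · rw [ends_inl] at hxy
    obtain ⟨x, y, -, rfl, rfl⟩ := Sym2.exists_eq_mk_of_map_eq_mk hxy
    exact .inl (by simp)
  · obtain ⟨x, y, hends, rfl, rfl⟩ := Sym2.exists_eq_mk_of_map_eq_mk hxy
    exact .inr ⟨f, he, hends⟩

theorem reach_ofLeft_iff {x y : G.V} :
    (glue1 G H w u).Reach S (ofLeft G H w u x) (ofLeft G H w u y) ↔
      G.Reach (Sum.inl ⁻¹' S) x y := by
  refine ⟨fun h => by simpa using reach_projLeft h, fun h => h.map _ fun e he x y hxy => ?_⟩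
  exact .inr ⟨.inl e, he, by rw [ends_inl, hxy]; rfl⟩

theorem reach_inr_iff {x y : H.V} :
    (glue1 G H w u).Reach S (.inr x) (.inr y) ↔ H.Reach (Sum.inr ⁻¹' S) x y := by
  refine ⟨fun h => by simpa using reach_projRight h, fun h => h.map _ fun e he x y hxy => ?_⟩
  exact .inr ⟨.inr e, he, by rw [ends_inr, hxy]; rfl⟩

theorem isBridge_inl_iff {e : G.E} :
    (glue1 G H w u).IsBridge S (.inl e) ↔ G.IsBridge (Sum.inl ⁻¹' S) e := by
  generalize hz : G.ends e = z
  induction z using Sym2.ind with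
  | h x y =>
    have hxy : (glue1 G H w u).ends (.inl e) = s(ofLeft G H w u x, ofLeft G H w u y) := by
      rw [ends_inl, hz]; rfl
    rw [isBridge_iff hxy, isBridge_iff hz, reach_ofLeft_iff]
    congr! 2
    exact Set.ext fun _ => and_congr_right' (not_congr Sum.inl_injective.eq_iff)

theorem isBridge_inr_iff {e : H.E} :
    (glue1 G H w u).IsBridge S (.inr e) ↔ H.IsBridge (Sum.inr ⁻¹' S) e := by
  generalize hz : H.ends e = z
  induction z using Sym2.ind with
  | h x y =>
    have hxy : (glue1 G H w u).ends (.inr e) = s(.inr x, .inr y) := by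
      rw [ends_inr, hz]; rfl
    rw [isBridge_iff hxy, isBridge_iff hz, reach_inr_iff]
    congr! 2
    exact Set.ext fun _ => and_congr_right' (not_congr Sum.inr_injective.eq_iff)

theorem isForest_iff (S : Finset (G.E ⊕ H.E)) :
    (glue1 G H w u).IsForest S ↔ G.IsForest S.toLeft ∧ H.IsForest S.toRight := by
  rw [isForest_iff_isBridge, isForest_iff_isBridge]
  refine (@Sum.forall G.E H.E fun e =>
    e ∈ S → (glue1 G H w u).IsBridge (S : Set (G.E ⊕ H.E)) e).trans ?_
  simp only [Finset.mem_toLeft, Finset.mem_toRight, Finset.coe_toLeft, Finset.coe_toRight]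
  exact and_congr (forall₂_congr fun _ _ => isBridge_inl_iff)
    (forall₂_congr fun _ _ => isBridge_inr_iff)

theorem forall_reach_inr_or_reach_inr_iff {u₂ : H.V} :
    (∀ a, (glue1 G H w u).Reach S (.inr u) a ∨ (glue1 G H w u).Reach S (.inr u₂) a) ↔
      (∀ x, G.Reach (Sum.inl ⁻¹' S) w x) ∧
        ∀ y, H.Reach (Sum.inr ⁻¹' S) u y ∨ H.Reach (Sum.inr ⁻¹' S) u₂ y := by
  constructor
  · intro h
    refine ⟨fun x => ?_, fun y => by simpa only [reach_inr_iff] using h (.inr y)⟩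
    rcases h (ofLeft G H w u x) with h' | h' <;> simpa using reach_projLeft h'
  · rintro ⟨hG, hH⟩ (⟨x, hx⟩ | y)
    · left
      rw [← ofLeft_self, ← ofLeft_of_ne hx]
      exact reach_ofLeft_iff.mpr (hG x)
    · simpa only [reach_inr_iff] using hH y

theorem isTwoForest_iff (u₂ : H.V) (S : Finset (G.E ⊕ H.E)) :
    (glue1 G H w u).IsTwoForest (.inr u) (.inr u₂) S ↔
      G.IsSpanningTree S.toLeft ∧ H.IsTwoForest u u₂ S.toRight := by
  simp only [IsTwoForest, IsSpanningTree, isForest_iff, reach_inr_iff,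
    forall_reach_inr_or_reach_inr_iff, forall_reach_iff w, Finset.coe_toLeft, Finset.coe_toRight]
  tauto

end glue1

theorem stmt_9_general (L₁ L₂ : Multigraph) (w : L₁.V) (u₁ u₂ : L₂.V) :
    (glue1 L₁ L₂ w u₁).twoForestCount (Sum.inr u₁) (Sum.inr u₂) =
      L₁.treeCount * L₂.twoForestCount u₁ u₂ := by
  rw [twoForestCount, treeCount, ← Nat.card_prod]
  exact Nat.card_congr <| (Finset.sumEquiv.toEquiv.subtypeEquiv
    (glue1.isTwoForest_iff u₂)).trans Equiv.subtypeProdEquivProd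

/-- If `L₁` is a connected finite graph with one distinguished vertex `w` and `L₂` is a
connected finite graph with two distinguished vertices `u₁ ≠ u₂`, then the number of
spanning 2-forests of the gluing of `L₁` and `L₂` along `w = u₁`, separating its two
distinguished vertices, equals `κ(L₁) · F₂(L₂)`. -/
theorem stmt_9 (L₁ L₂ : Multigraph) (w : L₁.V) (u₁ u₂ : L₂.V) (hu : u₁ ≠ u₂)
    (h₁ : L₁.Connected) (h₂ : L₂.Connected) :
    (glue1 L₁ L₂ w u₁).twoForestCount (Sum.inr u₁) (Sum.inr u₂) =
      L₁.treeCount * L₂.twoForestCount u₁ u₂ :=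
  stmt_9_general L₁ L₂ w u₁ u₂
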